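/- arXiv:2010.13167 — 4 statements merged into one kernel-verified Lean document; each statement's English description precedes it below -/
import Mathlib

section
/- Every residually finite finitely generated group is Hopfian. -/
lemma finite_homs (G H : Type*) [Group G] [Group.FG G] [Group H] [Finite H] :
    Finite (G →* H) := by
  obtain ⟨S, hS⟩ := Group.FG.out (G := G)
  have : Function.Injective (fun f : G →* H => fun s : S => f s) := by
    intro f g h
    refine MonoidHom.eq_of_eqOn_dense hS ?_
    intro x hx
    exact congrFun h ⟨x, hx⟩
  exact Finite.of_injective _ this

/-- Every residually finite finitely generated group is Hopfian. -/
theorem residuallyFinite_fg_group_hopfian (G : Type*) [Group G] [Group.FG G]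
    (hrf : ∀ g : G, g ≠ 1 → ∃ (H : Type) (_ : Group H) (_ : Finite H)
      (φ : G →* H), φ g ≠ 1) :
    ∀ f : G →* G, Function.Surjective f → Function.Bijective f := by
  intro f hf
  refine ⟨?_, hf⟩
  rw [← MonoidHom.ker_eq_bot_iff, eq_bot_iff]
  intro g hg
  by_contra hg1
  simp only [Subgroup.mem_bot] at hg1
  obtain ⟨H, _, _, φ, hφ⟩ := hrf g hg1
  have := finite_homs G H
  -- composition with f is injective on homs, hence surjective
  have hinj : Function.Injective (fun ψ : G →* H => ψ.comp f) := by
    intro a b h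
    ext x
    obtain ⟨y, rfl⟩ := hf x
    exact congrArg (fun ψ : G →* H => ψ y) h
  have hsurj : Function.Surjective (fun ψ : G →* H => ψ.comp f) :=
    Finite.surjective_of_injective hinj
  obtain ⟨ψ, hψ⟩ := hsurj φ
  have : φ g = ψ (f g) := by rw [← hψ]; rfl
  rw [MonoidHom.mem_ker.mp hg, map_one] at this
  exact hφ this
end

section
/- Every finitely generated linear group over the real numbers is residually finite, and hence Hopfian. -/
set_option maxHeartbeats 1000000
set_option synthInstance.maxHeartbeats 400000

instance : IsJacobsonRing ℤ := by
  rw [isJacobsonRing_iff_prime_eq]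
  intro P hP
  rcases eq_or_ne P ⊥ with rfl | hPb
  · refine le_antisymm (fun x hx => ?_) Ideal.le_jacobson
    rw [Ideal.mem_jacobson_bot] at hx
    rcases Int.isUnit_iff.mp (hx x) with h1 | h1 <;>
      · simp only [Ideal.mem_bot]; nlinarith
  · haveI := IsPrime.to_maximal_ideal hPb
    exact Ideal.jacobson_eq_self_of_isMaximal

theorem finite_of_field_int_fg (S : Type*) [Field S] [Module.Finite ℤ S] : Finite S := by
  by_cases hc : CharZero S
  · exfalso
    have h2 : IsIntegral ℤ ((Rat.castHom S) (1/2 : ℚ)) := IsIntegral.of_finite ℤ _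
    rw [show ((Rat.castHom S) (1/2 : ℚ)) = (Rat.castHom S).toIntAlgHom (1/2 : ℚ) from rfl,
      isIntegral_algHom_iff (Rat.castHom S).toIntAlgHom (Rat.cast_injective)] at h2
    obtain ⟨y, hy⟩ := IsIntegrallyClosed.isIntegral_iff.mp h2
    have : ((2 * y : ℤ) : ℚ) = 1 := by
      push_cast
      rw [show ((y : ℚ)) = algebraMap ℤ ℚ y from rfl, hy]
      ring
    have : (2 * y : ℤ) = 1 := by exact_mod_cast this
    omega
  · set p := ringChar S with hp
    haveI : CharP S p := ringChar.charP S
    have hp0 : p ≠ 0 := by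
      intro h
      haveI : CharP S 0 := h ▸ ringChar.charP S
      exact hc (CharP.charP_to_charZero S)
    haveI : NeZero p := ⟨hp0⟩
    letI : Algebra (ZMod p) S := ZMod.algebra S p
    haveI : Module.Finite (ZMod p) S := Module.Finite.of_restrictScalars_finite ℤ (ZMod p) S
    exact Module.finite_of_finite (ZMod p)


theorem finite_quotient_maximal_of_fg {R : Type*} [CommRing R] [Algebra.FiniteType ℤ R]
    (m : Ideal R) [m.IsMaximal] : Finite (R ⧸ m) := by
  letI : Field (R ⧸ m) := Ideal.Quotient.field m
  haveI : Algebra.FiniteType ℤ (R ⧸ m) :=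
    Algebra.FiniteType.of_surjective (Ideal.Quotient.mkₐ ℤ m)
      (Ideal.Quotient.mkₐ_surjective ℤ m)
  haveI : Module.Finite ℤ (R ⧸ m) := finite_of_finite_type_of_isJacobsonRing ℤ (R ⧸ m)
  exact finite_of_field_int_fg (R ⧸ m)

/-- Every finitely generated linear group over ℝ is residually finite, hence Hopfian. -/
theorem fg_linear_group_residuallyFinite_hopfian (G : Type*) [Group G] [Group.FG G]
    (hlin : ∃ (n : ℕ) (φ : G →* GL (Fin n) ℝ), Function.Injective φ) :
    (∀ g : G, g ≠ 1 → ∃ (H : Type) (_ : Group H) (_ : Finite H)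
      (φ : G →* H), φ g ≠ 1) ∧
    (∀ f : G →* G, Function.Surjective f → Function.Bijective f) := by
  obtain ⟨n, φ, hφ⟩ := hlin
  obtain ⟨N, T, -, hT⟩ := Group.fg_iff'.mp ‹Group.FG G›
  have hres : ∀ g : G, g ≠ 1 → ∃ (H : Type) (_ : Group H) (_ : Finite H)
      (ψ : G →* H), ψ g ≠ 1 := by
    have key : ∃ A : Subalgebra ℤ ℝ, A.FG ∧
        ∀ g : G, (∀ i j, (φ g).val i j ∈ A) ∧ (∀ i j, ((φ g)⁻¹).val i j ∈ A) := by
      set F : (T × Fin n × Fin n) × Bool → ℝ := fun x =>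
        if x.2 then (φ x.1.1).val x.1.2.1 x.1.2.2 else ((φ x.1.1)⁻¹).val x.1.2.1 x.1.2.2 with hF
      refine ⟨Algebra.adjoin ℤ (Set.range F),
        ⟨(Set.finite_range F).toFinset, by rw [Set.Finite.coe_toFinset]⟩, ?_⟩
      set A : Subalgebra ℤ ℝ := Algebra.adjoin ℤ (Set.range F) with hA
      intro g
      have hg : g ∈ Subgroup.closure (T : Set G) := hT ▸ Subgroup.mem_top g
      refine Subgroup.closure_induction (fun x hx => ⟨fun i j => ?_, fun i j => ?_⟩)
        ⟨fun i j => ?_, fun i j => ?_⟩ (fun x y hx hy px py => ⟨fun i j => ?_, fun i j => ?_⟩)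
        (fun x hx px => ⟨fun i j => by rw [map_inv]; exact px.2 i j,
          fun i j => by rw [map_inv, inv_inv]; exact px.1 i j⟩) hg
      · exact Algebra.subset_adjoin ⟨⟨⟨⟨x, hx⟩, i, j⟩, true⟩, by simp [hF]⟩
      · exact Algebra.subset_adjoin ⟨⟨⟨⟨x, hx⟩, i, j⟩, false⟩, by simp [hF]⟩
      · rw [map_one φ]
        simp only [Units.val_one, Matrix.one_apply]
        split <;> [exact A.one_mem; exact A.zero_mem]
      · rw [map_one φ, inv_one]
        simp only [Units.val_one, Matrix.one_apply]
        split <;> [exact A.one_mem; exact A.zero_mem]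
      · rw [map_mul φ, Units.val_mul, Matrix.mul_apply]
        exact A.sum_mem fun k _ => A.mul_mem (px.1 i k) (py.1 k j)
      · rw [map_mul φ, mul_inv_rev, Units.val_mul, Matrix.mul_apply]
        exact A.sum_mem fun k _ => A.mul_mem (py.2 i k) (px.2 k j)
    obtain ⟨A, hAfg, hmem⟩ := key
    haveI : Algebra.FiniteType ℤ A := (Subalgebra.fg_iff_finiteType A).mp hAfg
    haveI : IsJacobsonRing A := isJacobsonRing_of_finiteType (A := ℤ)
    -- matrices over A
    set M : G → Matrix (Fin n) (Fin n) A := fun g i j => ⟨(φ g).val i j, (hmem g).1 i j⟩ with hM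
    set Nt : G → Matrix (Fin n) (Fin n) A := fun g i j => ⟨((φ g)⁻¹).val i j, (hmem g).2 i j⟩
      with hNt
    set ι : Matrix (Fin n) (Fin n) A →+* Matrix (Fin n) (Fin n) ℝ :=
      RingHom.mapMatrix (A.val.toRingHom) with hι
    have hιinj : Function.Injective ι := by
      intro X Y h
      ext i j
      have := congrFun (congrFun h i) j
      exact this
    have hkey : ∀ g, ι (M g) = (φ g).val := fun g => rfl
    have hkey' : ∀ g, ι (Nt g) = ((φ g)⁻¹).val := fun g => rfl
    have hMN : ∀ g, M g * Nt g = 1 ∧ Nt g * M g = 1 := by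
      intro g
      constructor <;> apply hιinj <;>
        rw [map_mul, map_one, hkey, hkey', ← Units.val_mul] <;> simp
    -- the homomorphism into matrices over A
    set ψA : G →* (Matrix (Fin n) (Fin n) A)ˣ :=
      { toFun := fun g => ⟨M g, Nt g, (hMN g).1, (hMN g).2⟩
        map_one' := by
          apply Units.ext
          apply hιinj
          show ι (M 1) = ι 1
          rw [hkey, map_one φ, map_one]
          exact Units.val_one
        map_mul' := by
          intro x y
          apply Units.ext
          apply hιinj
          show ι (M (x * y)) = ι (M x * M y)
          rw [map_mul, hkey, hkey, hkey, map_mul φ, Units.val_mul] } with hψA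
    intro g hg
    -- a nonzero element of A detecting g
    have hφg : (φ g).val ≠ 1 := by
      intro h
      exact hg (hφ (by rw [map_one φ]; exact Units.ext h))
    have : ∃ i j, (φ g).val i j ≠ (1 : Matrix (Fin n) (Fin n) ℝ) i j := by
      by_contra h
      push_neg at h
      exact hφg (by ext i j; exact h i j)
    obtain ⟨i, j, hij⟩ := this
    set c : A := M g i j - (1 : Matrix (Fin n) (Fin n) A) i j with hc
    have hone : (A.val) ((1 : Matrix (Fin n) (Fin n) A) i j)
        = (1 : Matrix (Fin n) (Fin n) ℝ) i j := by
      simp [Matrix.one_apply, apply_ite (A.val)]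
    have hc0 : c ≠ 0 := by
      intro h
      apply hij
      have := congrArg (A.val) h
      rw [hc, map_sub, map_zero, hone, sub_eq_zero] at this
      exact this
    -- a maximal ideal avoiding c
    have hjac : (⊥ : Ideal A).jacobson = ⊥ :=
      IsJacobsonRing.out (inferInstance) Ideal.isRadical_bot_of_noZeroDivisors
    have : c ∉ (⊥ : Ideal A).jacobson := by rw [hjac]; simpa using hc0
    rw [Ideal.jacobson, Ideal.mem_sInf] at this
    push_neg at this
    obtain ⟨m, ⟨-, hmmax⟩, hcm⟩ := this
    haveI : m.IsMaximal := hmmax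
    haveI : Finite (A ⧸ m) := finite_quotient_maximal_of_fg m
    refine ⟨(Matrix (Fin n) (Fin n) (A ⧸ m))ˣ, inferInstance, inferInstance,
      (Units.map (RingHom.mapMatrix (Ideal.Quotient.mk m)).toMonoidHom).comp ψA, ?_⟩
    intro hone1
    apply hcm
    have hval : (RingHom.mapMatrix (Ideal.Quotient.mk m)) (M g) = 1 := by
      have := congrArg Units.val hone1
      exact this
    have hentry : Ideal.Quotient.mk m (M g i j)
        = Ideal.Quotient.mk m ((1 : Matrix (Fin n) (Fin n) A) i j) := by
      have h1 := congrFun (congrFun hval i) j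
      rw [show ((RingHom.mapMatrix (Ideal.Quotient.mk m)) (M g)) i j
          = Ideal.Quotient.mk m (M g i j) from rfl] at h1
      rw [h1]
      simp [Matrix.one_apply, apply_ite (Ideal.Quotient.mk m)]
    rw [hc]
    exact Ideal.Quotient.eq.mp hentry
  refine ⟨hres, ?_⟩
  -- Hopfian
  intro f hfsurj
  refine ⟨?_, hfsurj⟩
  rw [injective_iff_map_eq_one]
  intro g hgker
  by_contra hg
  obtain ⟨H, _, _, π, hπg⟩ := hres g hg
  -- finitely many homomorphisms G →* H
  haveI : Finite (G →* H) := by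
    refine Finite.of_injective (fun ψ : G →* H => fun t : T => ψ t) ?_
    intro ψ₁ ψ₂ h
    refine MonoidHom.eq_of_eqOn_dense hT ?_
    intro x hx
    exact congrFun h ⟨x, hx⟩
  have hinj : Function.Injective (fun ψ : G →* H => ψ.comp f) := by
    intro ψ₁ ψ₂ h
    ext x
    obtain ⟨y, rfl⟩ := hfsurj x
    exact congrFun (congrArg (fun (ψ : G →* H) => (ψ : G → H)) h) y
  obtain ⟨ψ, hψ⟩ := (Finite.injective_iff_surjective.mp hinj) π
  apply hπg
  rw [← hψ]
  show ψ (f g) = 1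
  rw [hgker, map_one]
end

section
/- Every free group of finite rank is Hopfian: if F is a free group on a finite set, then every surjective group homomorphism F → F is injective, hence an automorphism. -/
/-- Any injective-on-a-set function on a finite type extends to a permutation. -/
theorem exists_perm_extend {X : Type*} [Finite X] (f : X → X) (D : Set X)
    (hinj : Set.InjOn f D) : ∃ σ : Equiv.Perm X, ∀ x ∈ D, σ x = f x := by
  classical
  cases nonempty_fintype X
  let e1 : D ≃ (f '' D) := Equiv.Set.imageOfInjOn f D hinj
  have hcard : Fintype.card (↥(Dᶜ)) = Fintype.card (↥((f '' D)ᶜ)) := by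
    rw [Fintype.card_compl_set, Fintype.card_compl_set, Fintype.card_congr e1]
  let e2 : (↥(Dᶜ)) ≃ (↥((f '' D)ᶜ)) := Fintype.equivOfCardEq hcard
  refine ⟨(Equiv.Set.sumCompl D).symm.trans ((e1.sumCongr e2).trans
    (Equiv.Set.sumCompl (f '' D))), ?_⟩
  intro x hx
  simp only [Equiv.trans_apply, Equiv.Set.sumCompl_symm_apply_of_mem hx,
    Equiv.sumCongr_apply, Sum.map_inl, Equiv.Set.sumCompl_apply_inl]
  rfl

/-- Free groups are residually finite: every nontrivial element survives in a
finite (symmetric group) quotient. -/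
theorem freeGroup_residually_finite {α : Type*} (x : FreeGroup α) (hx : x ≠ 1) :
    ∃ (n : ℕ) (φ : FreeGroup α →* Equiv.Perm (Fin (n + 1))), φ x ≠ 1 := by
  classical
  obtain ⟨L, hred, hmk, hnil⟩ :
      ∃ L : List (α × Bool), FreeGroup.reduce L = L ∧ FreeGroup.mk L = x ∧ L ≠ [] :=
    ⟨x.toWord, x.reduce_toWord, FreeGroup.mk_toWord,
      fun h => hx (FreeGroup.toWord_eq_nil_iff.mp h)⟩
  have hn0 : 0 < L.length := List.length_pos_iff.mpr hnil
  -- A reduced word has no adjacent cancelling pair.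
  have hchain : ∀ (i j : ℕ) (a : α) (b : Bool) (hi : i < L.length) (hj : j < L.length),
      i + 1 = j → L[i] = (a, b) → L[j] = (a, !b) → False := by
    intro i j a b hi hj hij h1 h2
    subst hij
    apply FreeGroup.reduce.not (L₁ := L) (L₂ := L.take i) (L₃ := L.drop (i + 2))
      (x := a) (b := b)
    rw [hred]
    conv_lhs => rw [← List.take_append_drop i L]
    congr 1
    rw [List.drop_eq_getElem_cons hi, h1, List.drop_eq_getElem_cons hj, h2]
  -- mutual exclusion of the two move conditions at a point
  have hexcl : ∀ (a : α) (j : ℕ), (1 ≤ j ∧ L[j - 1]? = some (a, true)) →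
      L[j]? = some (a, false) → False := by
    rintro a j ⟨hj1, h1⟩ h2
    obtain ⟨hlt1, he1⟩ := List.getElem?_eq_some_iff.mp h1
    obtain ⟨hlt2, he2⟩ := List.getElem?_eq_some_iff.mp h2
    exact hchain (j - 1) j a true hlt1 hlt2 (by omega) he1 (by simpa using he2)
  -- the partial move functions
  let F : α → Fin (L.length + 1) → Fin (L.length + 1) := fun a j =>
    if 1 ≤ j.val ∧ L[j.val - 1]? = some (a, true) then
      ⟨j.val - 1, by have := j.isLt; omega⟩
    else if h2 : L[j.val]? = some (a, false) then
      ⟨j.val + 1, by have := (List.getElem?_eq_some_iff.mp h2).1; omega⟩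
    else j
  let D : α → Set (Fin (L.length + 1)) := fun a =>
    {j | (1 ≤ j.val ∧ L[j.val - 1]? = some (a, true)) ∨ L[j.val]? = some (a, false)}
  have hF1 : ∀ (a : α) (j : Fin (L.length + 1))
      (h : 1 ≤ j.val ∧ L[j.val - 1]? = some (a, true)),
      F a j = ⟨j.val - 1, by have := j.isLt; omega⟩ := fun a j h => if_pos h
  have hF2 : ∀ (a : α) (j : Fin (L.length + 1)) (h : L[j.val]? = some (a, false)),
      F a j = ⟨j.val + 1, by have := (List.getElem?_eq_some_iff.mp h).1; omega⟩ := by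
    intro a j h
    have hnot : ¬(1 ≤ j.val ∧ L[j.val - 1]? = some (a, true)) := fun hc => hexcl a j.val hc h
    simp only [F, if_neg hnot, dif_pos h]
  have hFinj : ∀ a : α, Set.InjOn (F a) (D a) := by
    intro a j hj k hk heq
    rcases hj with hj | hj <;> rcases hk with hk | hk
    · rw [hF1 a j hj, hF1 a k hk] at heq
      have := congrArg Fin.val heq
      exact Fin.ext (by simp only at this; omega)
    · rw [hF1 a j hj, hF2 a k hk] at heq
      have hv := congrArg Fin.val heq
      simp only at hv
      -- j.val - 1 = k.val + 1, so j.val = k.val + 2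
      obtain ⟨hlt1, he1⟩ := List.getElem?_eq_some_iff.mp hj.2
      obtain ⟨hlt2, he2⟩ := List.getElem?_eq_some_iff.mp hk
      exact absurd rfl (fun _ : (0:ℕ) = 0 => hchain k.val (j.val - 1) a false hlt2 hlt1
        (by omega) he2 (by simpa using he1))
    · rw [hF2 a j hj, hF1 a k hk] at heq
      have hv := congrArg Fin.val heq
      simp only at hv
      obtain ⟨hlt1, he1⟩ := List.getElem?_eq_some_iff.mp hk.2
      obtain ⟨hlt2, he2⟩ := List.getElem?_eq_some_iff.mp hj
      exact absurd rfl (fun _ : (0:ℕ) = 0 => hchain j.val (k.val - 1) a false hlt2 hlt1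
        (by omega) he2 (by simpa using he1))
    · rw [hF2 a j hj, hF2 a k hk] at heq
      have := congrArg Fin.val heq
      exact Fin.ext (by simp only at this; omega)
  -- extend to permutations
  choose σ hσ using fun a : α => exists_perm_extend (F a) (D a) (hFinj a)
  refine ⟨L.length, FreeGroup.lift σ, ?_⟩
  -- the word moves the top point down to 0
  have key : ∀ (m k : ℕ) (hk : k ≤ L.length) (_ : L.length - k = m),
      ((L.drop k).map fun p => cond p.2 (σ p.1) (σ p.1)⁻¹).prod
        ⟨L.length, Nat.lt_succ_self _⟩ = ⟨k, Nat.lt_succ_of_le hk⟩ := by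
    intro m
    induction m with
    | zero =>
      intro k hk hm
      have : k = L.length := by omega
      subst this
      simp [List.drop_length]
    | succ m ih =>
      intro k hk hm
      have hklt : k < L.length := by omega
      rw [List.drop_eq_getElem_cons hklt, List.map_cons, List.prod_cons,
        Equiv.Perm.mul_apply, ih (k + 1) (by omega) (by omega)]
      rcases hLk : L[k] with ⟨a, b⟩
      cases b
      · -- b = false : need (σ a)⁻¹ ⟨k+1⟩ = ⟨k⟩, i.e. σ a ⟨k⟩ = ⟨k+1⟩
        have hmem : (⟨k, by omega⟩ : Fin (L.length + 1)) ∈ D a := by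
          right
          exact List.getElem?_eq_some_iff.mpr ⟨hklt, hLk⟩
        have hcond : L[(⟨k, by omega⟩ : Fin (L.length + 1)).val]? = some (a, false) :=
          List.getElem?_eq_some_iff.mpr ⟨hklt, hLk⟩
        have hσk : σ a ⟨k, by omega⟩ = ⟨k + 1, by omega⟩ := by
          rw [hσ a _ hmem, hF2 a _ hcond]
        simp only [hLk, cond_false]
        rw [← hσk, Equiv.Perm.inv_def, Equiv.symm_apply_apply]
      · -- b = true : σ a ⟨k+1⟩ = ⟨k⟩
        have hk1 : k + 1 < L.length + 1 := Nat.succ_lt_succ hklt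
        have hcond : 1 ≤ (⟨k + 1, hk1⟩ : Fin (L.length + 1)).val ∧
            L[(⟨k + 1, hk1⟩ : Fin (L.length + 1)).val - 1]? = some (a, true) :=
          ⟨Nat.succ_le_succ (Nat.zero_le k), by simpa using List.getElem?_eq_some_iff.mpr ⟨hklt, hLk⟩⟩
        have hmem : (⟨k + 1, hk1⟩ : Fin (L.length + 1)) ∈ D a := Or.inl hcond
        simp only [hLk, cond_true]
        rw [hσ a _ hmem, hF1 a _ hcond]
        exact Fin.ext (by simp)
  intro hone
  have hev : FreeGroup.lift σ x = 1 := hone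
  rw [← hmk, FreeGroup.lift_mk] at hev
  have h0 := key L.length 0 (by omega) (by omega)
  simp only [List.drop_zero] at h0
  rw [hev] at h0
  simp only [Equiv.Perm.one_apply, Fin.mk.injEq] at h0
  omega

/-- Every free group of finite rank is Hopfian: every surjective endomorphism is
injective, hence an automorphism. -/
theorem freeGroup_hopfian (α : Type*) [Finite α] :
    ∀ f : FreeGroup α →* FreeGroup α, Function.Surjective f →
      Function.Injective f ∧ Function.Bijective f := by
  intro f hf
  have hinj : Function.Injective f := by
    rw [injective_iff_map_eq_one]
    intro x hfx
    by_contra hx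
    obtain ⟨n, φ, hφ⟩ := freeGroup_residually_finite x hx
    have hfin : Finite (FreeGroup α →* Equiv.Perm (Fin (n + 1))) := by
      have hji : Function.Injective
          (fun ρ : FreeGroup α →* Equiv.Perm (Fin (n + 1)) =>
            (fun a => ρ (FreeGroup.of a) : α → Equiv.Perm (Fin (n + 1)))) := by
        intro ρ₁ ρ₂ h
        exact FreeGroup.ext_hom _ _ fun a => congrFun h a
      exact Finite.of_injective _ hji
    have hΦinj : Function.Injective
        (fun ρ : FreeGroup α →* Equiv.Perm (Fin (n + 1)) => ρ.comp f) :=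
      fun ρ₁ ρ₂ h => (MonoidHom.cancel_right hf).mp h
    obtain ⟨ρ, hρ⟩ := Finite.injective_iff_surjective.mp hΦinj φ
    apply hφ
    have hx' : φ x = ρ (f x) := by rw [← hρ]; rfl
    rw [hx', hfx, map_one]
  exact ⟨hinj, hinj, hf⟩
end

section
/- GL(n, ℤ) is generated by a finite set of matrices, namely the elementary transvections (identity plus a single off-diagonal unit entry) together with the diagonal matrix diag(-1, 1, ..., 1). -/
open Matrix

namespace GLnZGen

variable {n : ℕ}

def gens (n : ℕ) (hn : 0 < n) : Set (GL (Fin n) ℤ) :=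
  { M : GL (Fin n) ℤ | ∃ i j : Fin n, i ≠ j ∧
      (M : Matrix (Fin n) (Fin n) ℤ) = Matrix.transvection i j 1 } ∪
  { M : GL (Fin n) ℤ |
      (M : Matrix (Fin n) (Fin n) ℤ) =
        Matrix.diagonal (fun k => if k = (⟨0, hn⟩ : Fin n) then -1 else 1) }

def tv (i j : Fin n) (hij : i ≠ j) (c : ℤ) : GL (Fin n) ℤ :=
  ⟨Matrix.transvection i j c, Matrix.transvection i j (-c),
   by rw [Matrix.transvection_mul_transvection_same _ _ hij]; simp,
   by rw [Matrix.transvection_mul_transvection_same _ _ hij]; simp⟩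

lemma tv_val (i j : Fin n) (hij : i ≠ j) (c : ℤ) :
    (tv i j hij c : Matrix (Fin n) (Fin n) ℤ) = Matrix.transvection i j c := rfl

lemma tv_mul (i j : Fin n) (hij : i ≠ j) (a b : ℤ) :
    tv i j hij a * tv i j hij b = tv i j hij (a + b) := by
  ext1
  show Matrix.transvection i j a * Matrix.transvection i j b = _
  rw [Matrix.transvection_mul_transvection_same _ _ hij]
  rfl

lemma tv_zero (i j : Fin n) (hij : i ≠ j) : tv i j hij 0 = 1 := by
  ext1; show Matrix.transvection i j 0 = _; simp

lemma tv_neg_one (i j : Fin n) (hij : i ≠ j) :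
    tv i j hij (-1) = (tv i j hij 1)⁻¹ := by
  rw [eq_inv_iff_mul_eq_one, tv_mul, neg_add_cancel, tv_zero]

lemma tv_mem (hn : 0 < n) (i j : Fin n) (hij : i ≠ j) (c : ℤ) :
    tv i j hij c ∈ Subgroup.closure (gens n hn) := by
  have h1 : tv i j hij 1 ∈ Subgroup.closure (gens n hn) :=
    Subgroup.subset_closure (Or.inl ⟨i, j, hij, rfl⟩)
  induction c using Int.induction_on with
  | zero => rw [tv_zero]; exact one_mem _
  | succ k ih => rw [← tv_mul i j hij k 1]; exact mul_mem ih h1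
  | pred k ih =>
      have : tv i j hij (-k - 1) = tv i j hij (-k) * tv i j hij (-1) := by
        rw [tv_mul, ← sub_eq_add_neg]
      rw [this, tv_neg_one]
      exact mul_mem ih (inv_mem h1)

end GLnZGen

namespace GLnZGen
open Matrix
variable {n : ℕ}

lemma diag_sq (i : Fin n) :
    diagonal (fun k : Fin n => if k = i then (-1 : ℤ) else 1) *
      diagonal (fun k => if k = i then -1 else 1) = 1 := by
  rw [diagonal_mul_diagonal]
  have h : (fun k : Fin n => (if k = i then (-1:ℤ) else 1) * (if k = i then -1 else 1))
      = fun _ => 1 := by funext k; split <;> norm_num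
  rw [h, diagonal_one]

def sgn (i : Fin n) : GL (Fin n) ℤ :=
  ⟨diagonal (fun k => if k = i then -1 else 1),
   diagonal (fun k => if k = i then -1 else 1), diag_sq i, diag_sq i⟩

lemma sgn_val (i : Fin n) :
    (sgn i : Matrix (Fin n) (Fin n) ℤ) = diagonal (fun k => if k = i then -1 else 1) := rfl

lemma wv_entry (p q : Fin n) (hpq : p ≠ q) (A : Matrix (Fin n) (Fin n) ℤ) (a b : Fin n) :
    ((transvection p q 1 * transvection q p (-1) * transvection p q 1 * A) :
        Matrix (Fin n) (Fin n) ℤ) a b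
      = if a = p then A q b else if a = q then -(A p b) else A a b := by
  have h : transvection p q 1 * transvection q p (-1) * transvection p q 1 * A
      = transvection p q 1 * (transvection q p (-1) * (transvection p q 1 * A)) := by
    simp only [Matrix.mul_assoc]
  rw [h]
  rcases eq_or_ne a p with rfl | hap
  · simp [hpq, hpq.symm]; try ring
  · rcases eq_or_ne a q with rfl | haq
    · simp [hpq, hpq.symm, hap]; try ring
    · simp [hap, haq]

lemma sgn_mem (hn : 0 < n) (i : Fin n) :
    sgn i ∈ Subgroup.closure (gens n hn) := by
  rcases eq_or_ne i ⟨0, hn⟩ with rfl | hne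
  · exact Subgroup.subset_closure (Or.inr rfl)
  · have hpq : (⟨0, hn⟩ : Fin n) ≠ i := Ne.symm hne
    set p : Fin n := ⟨0, hn⟩ with hp
    set W : GL (Fin n) ℤ := tv p i hpq 1 * tv i p hne (-1) * tv p i hpq 1 with hW
    have hWmem : W ∈ Subgroup.closure (gens n hn) :=
      mul_mem (mul_mem (tv_mem hn _ _ _ _) (tv_mem hn _ _ _ _)) (tv_mem hn _ _ _ _)
    have hsp : sgn p ∈ Subgroup.closure (gens n hn) :=
      Subgroup.subset_closure (Or.inr rfl)
    have key : sgn i * W = W * sgn p := by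
      ext1
      show (sgn i).val * W.val = W.val * (sgn p).val
      have hWval : (W.val : Matrix (Fin n) (Fin n) ℤ)
          = transvection p i 1 * transvection i p (-1) * transvection p i 1 := rfl
      rw [hWval]
      ext a b
      rw [show (↑(sgn i) : Matrix (Fin n) (Fin n) ℤ) = diagonal (fun k => if k = i then -1 else 1) from rfl, Matrix.diagonal_mul]
      have h1 : transvection p i 1 * transvection i p (-1) * transvection p i 1
          = transvection p i 1 * transvection i p (-1) * transvection p i 1 * 1 := by
        rw [Matrix.mul_one]
      rw [wv_entry p i hpq (sgn p).val a b]
      conv_lhs => rw [h1]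
      rw [wv_entry p i hpq 1 a b]
      rcases eq_or_ne a p with rfl | hap
      · simp [sgn_val, diagonal_apply, one_apply, hpq, hne]
      · rcases eq_or_ne a i with rfl | hai
        · simp [sgn_val, diagonal_apply, one_apply, hpq, hne, hap]
        · simp [sgn_val, diagonal_apply, one_apply, hap, hai]
    have : sgn i = W * sgn p * W⁻¹ := by
      rw [eq_mul_inv_iff_mul_eq, mul_assoc]
      rw [mul_assoc] at key
      exact key
    rw [this]
    exact mul_mem (mul_mem hWmem hsp) (inv_mem hWmem)

end GLnZGen

namespace GLnZGen
open Matrix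
variable {n : ℕ}

lemma natAbs_emod_lt (a b : ℤ) (hb : b ≠ 0) : (a % b).natAbs < b.natAbs := by
  have h1 : 0 ≤ a % b := Int.emod_nonneg a hb
  rcases hb.lt_or_gt with h | h
  · have h2 : a % b < -b := by
      rw [← Int.emod_neg]
      exact Int.emod_lt_of_pos a (by omega)
    omega
  · have h2 : a % b < b := Int.emod_lt_of_pos a h
    omega

/-- The first `r` columns of `M` agree with the identity matrix. -/
def cond (r : ℕ) (M : GL (Fin n) ℤ) : Prop :=
  ∀ i j : Fin n, (j : ℕ) < r →
    (M : Matrix (Fin n) (Fin n) ℤ) i j = if i = j then 1 else 0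

lemma inv_entry (r : ℕ) (M : GL (Fin n) ℤ) (h : cond r M) (a j : Fin n)
    (ha : r ≤ (a : ℕ)) (hj : (j : ℕ) < r) :
    ((M⁻¹ : GL (Fin n) ℤ) : Matrix (Fin n) (Fin n) ℤ) a j = 0 := by
  have h1 : ((M⁻¹ : GL (Fin n) ℤ) : Matrix (Fin n) (Fin n) ℤ) *
      (M : Matrix (Fin n) (Fin n) ℤ) = 1 := by
    rw [← Units.val_mul]; simp
  have h2 := congrFun (congrFun h1 a) j
  rw [Matrix.mul_apply] at h2
  have h3 : ∑ k, ((M⁻¹ : GL (Fin n) ℤ) : Matrix (Fin n) (Fin n) ℤ) a k *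
      (M : Matrix (Fin n) (Fin n) ℤ) k j
      = ((M⁻¹ : GL (Fin n) ℤ) : Matrix (Fin n) (Fin n) ℤ) a j := by
    rw [Finset.sum_eq_single j]
    · rw [h j j hj, if_pos rfl, mul_one]
    · intro b _ hbj
      rw [h b j hj, if_neg hbj, mul_zero]
    · intro habs; exact absurd (Finset.mem_univ j) habs
  rw [h3] at h2
  rw [h2, Matrix.one_apply_ne (by omega : a ≠ j)]

lemma sum_inv_mul (M : GL (Fin n) ℤ) (jr : Fin n) :
    ∑ k, ((M⁻¹ : GL (Fin n) ℤ) : Matrix (Fin n) (Fin n) ℤ) jr k *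
      (M : Matrix (Fin n) (Fin n) ℤ) k jr = 1 := by
  have h1 : ((M⁻¹ : GL (Fin n) ℤ) : Matrix (Fin n) (Fin n) ℤ) *
      (M : Matrix (Fin n) (Fin n) ℤ) = 1 := by
    rw [← Units.val_mul]; simp
  have h2 := congrFun (congrFun h1 jr) jr
  rw [Matrix.mul_apply] at h2
  rw [h2, Matrix.one_apply_eq]

end GLnZGen

namespace GLnZGen
open Matrix
variable {n : ℕ}

lemma tv_mul_val (i j : Fin n) (hij : i ≠ j) (c : ℤ) (M : GL (Fin n) ℤ) :
    ((tv i j hij c * M : GL (Fin n) ℤ) : Matrix (Fin n) (Fin n) ℤ)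
      = transvection i j c * (M : Matrix (Fin n) (Fin n) ℤ) := rfl

lemma sgn_mul_entry (i : Fin n) (M : GL (Fin n) ℤ) (a b : Fin n) :
    ((sgn i * M : GL (Fin n) ℤ) : Matrix (Fin n) (Fin n) ℤ) a b
      = (if a = i then -1 else 1) * (M : Matrix (Fin n) (Fin n) ℤ) a b := by
  show (((sgn i) : Matrix (Fin n) (Fin n) ℤ) * (M : Matrix (Fin n) (Fin n) ℤ)) a b = _
  rw [sgn_val, Matrix.diagonal_mul]

lemma euclid_final (hn : 0 < n) (r : ℕ) (hr : r < n) (M : GL (Fin n) ℤ) (hc : cond r M)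
    (hone : ∀ i i' : Fin n, r ≤ (i : ℕ) → r ≤ (i' : ℕ) →
      (M : Matrix (Fin n) (Fin n) ℤ) i ⟨r, hr⟩ ≠ 0 →
      (M : Matrix (Fin n) (Fin n) ℤ) i' ⟨r, hr⟩ ≠ 0 → i = i') :
    ∃ T ∈ Subgroup.closure (gens n hn), cond r (T * M) ∧
      ∀ i : Fin n, r ≤ (i : ℕ) →
        ((T * M : GL (Fin n) ℤ) : Matrix (Fin n) (Fin n) ℤ) i ⟨r, hr⟩
          = if (i : ℕ) = r then 1 else 0 := by
  set jr : Fin n := ⟨r, hr⟩ with hjr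
  have hjrv : (jr : ℕ) = r := rfl
  -- there is a nonzero entry in column r at a row ≥ r
  have hex : ∃ i0 : Fin n, r ≤ (i0 : ℕ) ∧ (M : Matrix (Fin n) (Fin n) ℤ) i0 jr ≠ 0 := by
    by_contra hno
    push_neg at hno
    have h1 := sum_inv_mul M jr
    have h2 : ∑ k, ((M⁻¹ : GL (Fin n) ℤ) : Matrix (Fin n) (Fin n) ℤ) jr k *
        (M : Matrix (Fin n) (Fin n) ℤ) k jr = 0 := by
      apply Finset.sum_eq_zero
      intro k _
      rcases lt_or_ge (k : ℕ) r with h | h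
      · rw [inv_entry r M hc jr k (by omega) h, zero_mul]
      · rw [hno k h, mul_zero]
    rw [h2] at h1
    exact absurd h1 (by norm_num)
  obtain ⟨i0, hi0r, hi0⟩ := hex
  have hzero : ∀ k : Fin n, r ≤ (k : ℕ) → k ≠ i0 →
      (M : Matrix (Fin n) (Fin n) ℤ) k jr = 0 := by
    intro k hk hki0
    by_contra hk0
    exact hki0 (hone k i0 hk hi0r hk0 hi0)
  have hunit : (M : Matrix (Fin n) (Fin n) ℤ) i0 jr = 1 ∨
      (M : Matrix (Fin n) (Fin n) ℤ) i0 jr = -1 := by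
    have h1 := sum_inv_mul M jr
    rw [Finset.sum_eq_single i0] at h1
    · exact Int.isUnit_iff.mp (IsUnit.of_mul_eq_one _ (by rw [mul_comm]; exact h1))
    · intro b _ hb
      rcases lt_or_ge (b : ℕ) r with h | h
      · rw [inv_entry r M hc jr b (by omega) h, zero_mul]
      · rw [hzero b h hb, mul_zero]
    · intro h; exact absurd (Finset.mem_univ i0) h
  -- stage 1 : fix the sign
  have stage1 : ∃ T0 ∈ Subgroup.closure (gens n hn), cond r (T0 * M) ∧
      ((T0 * M : GL (Fin n) ℤ) : Matrix (Fin n) (Fin n) ℤ) i0 jr = 1 ∧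
      ∀ k : Fin n, r ≤ (k : ℕ) → k ≠ i0 →
        ((T0 * M : GL (Fin n) ℤ) : Matrix (Fin n) (Fin n) ℤ) k jr = 0 := by
    rcases hunit with h1 | h1
    · refine ⟨1, one_mem _, ?_, ?_, ?_⟩
      · rw [one_mul]; exact hc
      · rw [one_mul]; exact h1
      · intro k hk hki; rw [one_mul]; exact hzero k hk hki
    · refine ⟨sgn i0, sgn_mem hn i0, ?_, ?_, ?_⟩
      · intro a j hj
        rw [sgn_mul_entry, hc a j hj]
        rcases eq_or_ne a i0 with rfl | ha
        · rw [if_pos rfl, if_neg (show ¬ a = j by omega)]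
          ring
        · rw [if_neg ha, one_mul]
      · rw [sgn_mul_entry, if_pos rfl, h1]; ring
      · intro k hk hki
        rw [sgn_mul_entry, hzero k hk hki, mul_zero]
  obtain ⟨T0, hT0m, hT0c, hT0e, hT0z⟩ := stage1
  by_cases hne : i0 = jr
  · refine ⟨T0, hT0m, hT0c, ?_⟩
    intro i hi
    rcases eq_or_ne (i : ℕ) r with h | h
    · have hij : i = i0 := Fin.ext (by omega)
      rw [if_pos h, hij, hT0e]
    · rw [if_neg h]
      exact hT0z i hi (by intro hh; rw [hh, hne] at h; exact h hjrv)
  · have hne' : jr ≠ i0 := fun h => hne h.symm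
    have hi0nr : ¬ (i0 : ℕ) = r := fun hh => hne (Fin.ext (by omega))
    have hgrp : tv i0 jr hne (-1) * (tv jr i0 hne' 1 * T0) * M
        = tv i0 jr hne (-1) * (tv jr i0 hne' 1 * (T0 * M)) := by
      rw [mul_assoc, mul_assoc]
    refine ⟨tv i0 jr hne (-1) * (tv jr i0 hne' 1 * T0),
      mul_mem (tv_mem hn _ _ _ _) (mul_mem (tv_mem hn _ _ _ _) hT0m), ?_, ?_⟩
    · -- cond r
      rw [hgrp]
      intro a j hj
      rw [tv_mul_val, tv_mul_val]
      have h1 : ¬ i0 = j := by omega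
      have h2 : ¬ jr = j := by omega
      by_cases ha : a = i0
      · rw [ha, Matrix.transvection_mul_apply_same,
          Matrix.transvection_mul_apply_of_ne _ _ _ _ hne,
          Matrix.transvection_mul_apply_same,
          hT0c i0 j hj, hT0c jr j hj]
        simp only [if_neg h1, if_neg h2]
        ring
      · rw [Matrix.transvection_mul_apply_of_ne _ _ _ _ ha]
        by_cases ha2 : a = jr
        · rw [ha2, Matrix.transvection_mul_apply_same,
            hT0c jr j hj, hT0c i0 j hj]
          simp only [if_neg h1, if_neg h2]
          ring
        · rw [Matrix.transvection_mul_apply_of_ne _ _ _ _ ha2, hT0c a j hj]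
    · -- column r
      rw [hgrp]
      intro i hi
      rw [tv_mul_val, tv_mul_val]
      have hBrr : ((T0 * M : GL (Fin n) ℤ) : Matrix (Fin n) (Fin n) ℤ) jr jr = 0 :=
        hT0z jr (by omega) hne'
      by_cases hii0 : i = i0
      · rw [hii0, Matrix.transvection_mul_apply_same,
          Matrix.transvection_mul_apply_of_ne _ _ _ _ hne,
          Matrix.transvection_mul_apply_same, hT0e, hBrr]
        rw [if_neg hi0nr]
        ring
      · rw [Matrix.transvection_mul_apply_of_ne _ _ _ _ hii0]
        by_cases hijr : i = jr
        · rw [hijr, Matrix.transvection_mul_apply_same, hBrr, hT0e,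
            if_pos hjrv]
          ring
        · rw [Matrix.transvection_mul_apply_of_ne _ _ _ _ hijr,
            hT0z i hi hii0,
            if_neg (show ¬ (i:ℕ) = r from fun hh => hijr (Fin.ext (by omega)))]

end GLnZGen

namespace GLnZGen
open Matrix
variable {n : ℕ}

lemma euclid (hn : 0 < n) (r : ℕ) (hr : r < n) :
    ∀ N : ℕ, ∀ M : GL (Fin n) ℤ, cond r M →
      (∑ k ∈ Finset.univ.filter (fun k : Fin n => r ≤ (k : ℕ)),
        ((M : Matrix (Fin n) (Fin n) ℤ) k ⟨r, hr⟩).natAbs) ≤ N →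
      ∃ T ∈ Subgroup.closure (gens n hn), cond r (T * M) ∧
        ∀ i : Fin n, r ≤ (i : ℕ) →
          ((T * M : GL (Fin n) ℤ) : Matrix (Fin n) (Fin n) ℤ) i ⟨r, hr⟩
            = if (i : ℕ) = r then 1 else 0 := by
  intro N
  induction N with
  | zero =>
      intro M hc hsum
      apply euclid_final hn r hr M hc
      intro i i' hi hi' hi0 hi'0
      exfalso
      have hmem : i ∈ Finset.univ.filter (fun k : Fin n => r ≤ (k : ℕ)) := by
        simp [hi]
      have h1 : ((M : Matrix (Fin n) (Fin n) ℤ) i ⟨r, hr⟩).natAbs ≤ 0 :=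
        le_trans (Finset.single_le_sum (f := fun k =>
          ((M : Matrix (Fin n) (Fin n) ℤ) k ⟨r, hr⟩).natAbs)
          (fun _ _ => Nat.zero_le _) hmem) hsum
      omega
  | succ N ih =>
      intro M hc hsum
      by_cases hpair : ∃ i i' : Fin n, r ≤ (i : ℕ) ∧ r ≤ (i' : ℕ) ∧ i ≠ i' ∧
          (M : Matrix (Fin n) (Fin n) ℤ) i ⟨r, hr⟩ ≠ 0 ∧
          (M : Matrix (Fin n) (Fin n) ℤ) i' ⟨r, hr⟩ ≠ 0 ∧
          ((M : Matrix (Fin n) (Fin n) ℤ) i' ⟨r, hr⟩).natAbs ≤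
            ((M : Matrix (Fin n) (Fin n) ℤ) i ⟨r, hr⟩).natAbs
      · obtain ⟨i, i', hi, hi', hii', hMi, hMi', habs⟩ := hpair
        set jr : Fin n := ⟨r, hr⟩ with hjr
        set A : Matrix (Fin n) (Fin n) ℤ := (M : Matrix (Fin n) (Fin n) ℤ) with hA
        have hcA : ∀ p q : Fin n, (q : ℕ) < r → A p q = if p = q then 1 else 0 := hc
        set c : ℤ := -(A i jr / A i' jr) with hcdef
        set M1 : GL (Fin n) ℤ := tv i i' hii' c * M with hM1
        have hA1 : (M1 : Matrix (Fin n) (Fin n) ℤ) = transvection i i' c * A :=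
          tv_mul_val _ _ _ _ _
        -- entries of M1
        have hM1ne : ∀ a b : Fin n, a ≠ i →
            (M1 : Matrix (Fin n) (Fin n) ℤ) a b = A a b := by
          intro a b ha
          rw [hA1, Matrix.transvection_mul_apply_of_ne _ _ _ _ ha]
        have hM1i : ∀ b : Fin n,
            (M1 : Matrix (Fin n) (Fin n) ℤ) i b = A i b + c * A i' b := by
          intro b
          rw [hA1, Matrix.transvection_mul_apply_same]
        have hM1ir : (M1 : Matrix (Fin n) (Fin n) ℤ) i jr = A i jr % A i' jr := by
          rw [hM1i, hcdef, Int.emod_def]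
          ring
        -- cond r M1
        have hc1 : cond r M1 := by
          intro a j hj
          by_cases ha : a = i
          · rw [ha, hM1i, hcA i j hj, hcA i' j hj,
              if_neg (show ¬ i' = j by omega)]
            ring
          · rw [hM1ne a j ha]
            exact hcA a j hj
        -- the measure strictly decreases
        have hlt : (∑ k ∈ Finset.univ.filter (fun k : Fin n => r ≤ (k : ℕ)),
            ((M1 : Matrix (Fin n) (Fin n) ℤ) k jr).natAbs) <
            ∑ k ∈ Finset.univ.filter (fun k : Fin n => r ≤ (k : ℕ)),
            (A k jr).natAbs := by
          apply Finset.sum_lt_sum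
          · intro k hk
            by_cases hki : k = i
            · rw [hki, hM1ir]
              have := natAbs_emod_lt (A i jr) (A i' jr) hMi'
              omega
            · rw [hM1ne k jr hki]
          · refine ⟨i, by simp [hi], ?_⟩
            rw [hM1ir]
            have := natAbs_emod_lt (A i jr) (A i' jr) hMi'
            omega
        obtain ⟨T, hTm, hTc, hTcol⟩ := ih M1 hc1 (by omega)
        refine ⟨T * tv i i' hii' c, mul_mem hTm (tv_mem hn _ _ _ _), ?_, ?_⟩
        · rw [mul_assoc]; exact hTc
        · rw [mul_assoc]; exact hTcol
      · apply euclid_final hn r hr M hc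
        intro a a' ha ha' hMa hMa'
        by_contra hne
        push_neg at hpair
        have p1 := hpair a a' ha ha' hne hMa hMa'
        have p2 := hpair a' a ha' ha (Ne.symm hne) hMa' hMa
        omega

end GLnZGen

namespace GLnZGen
open Matrix
variable {n : ℕ}

lemma clear_above (hn : 0 < n) (r : ℕ) (hr : r < n) :
    ∀ s : ℕ, ∀ M : GL (Fin n) ℤ, cond r M →
      (∀ i : Fin n, r ≤ (i : ℕ) →
        (M : Matrix (Fin n) (Fin n) ℤ) i ⟨r, hr⟩ = if (i : ℕ) = r then 1 else 0) →
      (∀ i : Fin n, (i : ℕ) < r → s ≤ (i : ℕ) →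
        (M : Matrix (Fin n) (Fin n) ℤ) i ⟨r, hr⟩ = 0) →
      ∃ T ∈ Subgroup.closure (gens n hn), cond (r + 1) (T * M) := by
  have hrv : ((⟨r, hr⟩ : Fin n) : ℕ) = r := rfl
  intro s
  induction s with
  | zero =>
      intro M hc hcol hz
      refine ⟨1, one_mem _, ?_⟩
      rw [one_mul]
      intro i j hj
      rcases lt_or_ge (j : ℕ) r with h | h
      · exact hc i j h
      · have hjr : j = ⟨r, hr⟩ := Fin.ext (by omega)
        subst hjr
        rcases lt_or_ge (i : ℕ) r with h2 | h2
        · rw [hz i h2 (Nat.zero_le _), if_neg (show ¬ i = ⟨r, hr⟩ by omega)]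
        · rw [hcol i h2]
          by_cases h3 : (i : ℕ) = r
          · rw [if_pos h3, if_pos (show i = ⟨r, hr⟩ by omega)]
          · rw [if_neg h3, if_neg (show ¬ i = ⟨r, hr⟩ by omega)]
  | succ s ih =>
      intro M hc hcol hz
      by_cases hs : s < r
      · have hsn : s < n := lt_trans hs hr
        set is : Fin n := ⟨s, hsn⟩ with his
        set jr : Fin n := ⟨r, hr⟩ with hjr
        have hisv : (is : ℕ) = s := rfl
        have hjrv : (jr : ℕ) = r := rfl
        have hne : is ≠ jr := by omega
        set c : ℤ := -((M : Matrix (Fin n) (Fin n) ℤ) is jr) with hcdef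
        set M1 : GL (Fin n) ℤ := tv is jr hne c * M with hM1
        have hA1 : (M1 : Matrix (Fin n) (Fin n) ℤ)
            = transvection is jr c * (M : Matrix (Fin n) (Fin n) ℤ) := tv_mul_val _ _ _ _ _
        have hM1ne : ∀ a b : Fin n, a ≠ is →
            (M1 : Matrix (Fin n) (Fin n) ℤ) a b = (M : Matrix (Fin n) (Fin n) ℤ) a b := by
          intro a b ha
          rw [hA1, Matrix.transvection_mul_apply_of_ne _ _ _ _ ha]
        have hM1i : ∀ b : Fin n, (M1 : Matrix (Fin n) (Fin n) ℤ) is b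
            = (M : Matrix (Fin n) (Fin n) ℤ) is b
              + c * (M : Matrix (Fin n) (Fin n) ℤ) jr b := by
          intro b
          rw [hA1, Matrix.transvection_mul_apply_same]
        have hc1 : cond r M1 := by
          intro a j hj
          by_cases ha : a = is
          · rw [ha, hM1i, hc is j hj, hc jr j hj,
              if_neg (show ¬ jr = j by omega)]
            ring
          · rw [hM1ne a j ha]
            exact hc a j hj
        have hcol1 : ∀ i : Fin n, r ≤ (i : ℕ) →
            (M1 : Matrix (Fin n) (Fin n) ℤ) i jr = if (i : ℕ) = r then 1 else 0 := by
          intro i hi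
          rw [hM1ne i jr (show i ≠ is by omega)]
          exact hcol i hi
        have hz1 : ∀ i : Fin n, (i : ℕ) < r → s ≤ (i : ℕ) →
            (M1 : Matrix (Fin n) (Fin n) ℤ) i jr = 0 := by
          intro i hir hsi
          by_cases hi : i = is
          · rw [hi, hM1i, hcol jr (by omega), if_pos rfl, hcdef]
            ring
          · rw [hM1ne i jr hi]
            exact hz i hir (by omega)
        obtain ⟨T, hTm, hTc⟩ := ih M1 hc1 hcol1 hz1
        refine ⟨T * tv is jr hne c, mul_mem hTm (tv_mem hn _ _ _ _), ?_⟩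
        rw [mul_assoc]
        exact hTc
      · apply ih M hc hcol
        intro i hir hsi
        omega

lemma step (hn : 0 < n) (r : ℕ) (hr : r < n) (M : GL (Fin n) ℤ) (hc : cond r M) :
    ∃ T ∈ Subgroup.closure (gens n hn), cond (r + 1) (T * M) := by
  obtain ⟨T1, hT1m, hT1c, hT1col⟩ := euclid hn r hr
    (∑ k ∈ Finset.univ.filter (fun k : Fin n => r ≤ (k : ℕ)),
      ((M : Matrix (Fin n) (Fin n) ℤ) k ⟨r, hr⟩).natAbs) M hc le_rfl
  obtain ⟨T2, hT2m, hT2c⟩ := clear_above hn r hr r (T1 * M) hT1c hT1col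
    (fun i hir hsi => by omega)
  refine ⟨T2 * T1, mul_mem hT2m hT1m, ?_⟩
  rw [mul_assoc]
  exact hT2c

lemma all_mem (hn : 0 < n) : ∀ k : ℕ, ∀ M : GL (Fin n) ℤ, cond (n - k) M →
    M ∈ Subgroup.closure (gens n hn) := by
  intro k
  induction k with
  | zero =>
      intro M hc
      have : M = 1 := by
        ext1
        ext a b
        rw [hc a b (by omega), Units.val_one, Matrix.one_apply]
      rw [this]
      exact one_mem _
  | succ k ih =>
      intro M hc
      by_cases hkn : n ≤ k
      · exact ih M (by rwa [show n - k = n - (k + 1) by omega])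
      · have hr : n - (k + 1) < n := by omega
        obtain ⟨T, hTm, hTc⟩ := step hn (n - (k + 1)) hr M hc
        have h2 : cond (n - k) (T * M) := by
          rwa [show n - k = n - (k + 1) + 1 by omega]
        have := ih (T * M) h2
        have hM : M = T⁻¹ * (T * M) := by group
        rw [hM]
        exact mul_mem (inv_mem hTm) this

end GLnZGen

/-- GL(n, ℤ) is generated by the elementary transvections together with
diag(-1, 1, ..., 1). -/
theorem GL_n_int_generated_by_transvections_and_diag (n : ℕ) (hn : 0 < n) :
    Subgroup.closure
      ({ M : GL (Fin n) ℤ | ∃ i j : Fin n, i ≠ j ∧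
          (M : Matrix (Fin n) (Fin n) ℤ) = Matrix.transvection i j 1 } ∪
       { M : GL (Fin n) ℤ |
          (M : Matrix (Fin n) (Fin n) ℤ) =
            Matrix.diagonal (fun k => if k = (⟨0, hn⟩ : Fin n) then -1 else 1) }) = ⊤ := by
  rw [eq_top_iff]
  intro M _
  exact GLnZGen.all_mem hn n M (fun i j hj => by omega)
end
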